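/- Let Y₁, Y₂ be independent N(0,1) random variables and Z = 1/(Y₁Y₂). Then Z has density f_Z(z) = (1/(π z²)) K₀(1/|z|) for z ≠ 0, where K₀ is the modified Bessel function of the second kind of order 0. -/

import Mathlib

open MeasureTheory ProbabilityTheory Real Set
open scoped ENNReal NNReal

/-- The modified Bessel function of the second kind of order 0,
`K₀(x) = ∫_0^∞ exp(-x cosh t) dt`. -/
noncomputable def besselK0 (x : ℝ) : ℝ :=
  ∫ t in Set.Ioi (0 : ℝ), Real.exp (-(x * Real.cosh t))

/-! Conditionally on `Y₁ = x ≠ 0`, the variable `1 / (x Y₂)` has density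
`φ(1 / (x z)) / (|x| z²)`, because `y ↦ 1 / (x y)` is an involution of `ℝ∖{0}` with Jacobian
`1 / (|x| z²)`. Integrating against `φ(x) dx`, the Gaussian exponent `(x² + 1 / (x z)²) / 2`
becomes `cosh t / |z|` under the substitution `x = e^{t/2} / √|z|`, and the remaining
`t`-integral is `2 K₀(1 / |z|)`. -/

theorem lintegral_eq_two_mul_setLIntegral_Ioi_of_even {g : ℝ → ℝ≥0∞}
    (hg : ∀ x, g (-x) = g x) :
    ∫⁻ x, g x = 2 * ∫⁻ x in Ioi 0, g x := by
  have h_Iic : ∫⁻ x in Iic 0, g x = ∫⁻ x in Ioi 0, g x := by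
    rw [setLIntegral_congr Ioi_ae_eq_Ici, ← lintegral_indicator measurableSet_Iic,
      ← lintegral_indicator measurableSet_Ici, ← lintegral_neg_eq_self]
    congr 1 with x
    simp [indicator, hg]
  rw [← lintegral_add_compl g measurableSet_Iic, compl_Iic, h_Iic, two_mul]

theorem setLIntegral_preimage_one_div_mul {c : ℝ} (hc : c ≠ 0) (g : ℝ → ℝ≥0∞)
    {s : Set ℝ} (hs : MeasurableSet s) :
    ∫⁻ y in (fun y ↦ 1 / (c * y)) ⁻¹' s, g y
      = ∫⁻ z in s, ENNReal.ofReal (1 / (|c| * z ^ 2)) * g (1 / (c * z)) := by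
  set h : ℝ → ℝ := fun y ↦ 1 / (c * y)
  have diff_zero_ae_eq (t : Set ℝ) : t \ ({0} : Set ℝ) =ᵐ[volume] t :=
    sdiff_ae_eq_self.2 (measure_mono_null inter_subset_right (measure_singleton 0))
  -- `h 0 = 0` since `1 / 0 = 0`, so `h` is an involution of all of `ℝ`.
  have h_invol : Function.Involutive h := fun y ↦ by
    rcases eq_or_ne y 0 with rfl | hy
    · simp [h]
    · simp only [h]; field_simp
  have h_deriv : ∀ z ∈ s \ {0}, HasDerivWithinAt h (c⁻¹ * -(z ^ 2)⁻¹) (s \ {0}) z := by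
    intro z hz
    have := ((hasDerivAt_inv hz.2).const_mul c⁻¹).hasDerivWithinAt (s := s \ {0})
    simpa [h, mul_inv, mul_comm] using this
  have h_image : h '' (s \ {0}) = h ⁻¹' s \ {0} := by
    rw [h_invol.image_eq_preimage_symm, preimage_sdiff]
    congr 1
    ext y
    simp [h, hc]
  calc ∫⁻ y in h ⁻¹' s, g y = ∫⁻ y in h '' (s \ {0}), g y :=
        setLIntegral_congr (h_image ▸ (diff_zero_ae_eq _).symm)
    _ = ∫⁻ z in s \ {0}, ENNReal.ofReal |c⁻¹ * -(z ^ 2)⁻¹| * g (h z) :=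
        lintegral_image_eq_lintegral_abs_deriv_mul (hs.diff (measurableSet_singleton 0)) h_deriv
          h_invol.injective.injOn g
    _ = _ := by
        refine (setLIntegral_congr (diff_zero_ae_eq s)).trans (lintegral_congr fun z ↦ ?_)
        rw [abs_mul, abs_neg, abs_inv, abs_inv, abs_of_nonneg (sq_nonneg z), one_div, mul_inv]

theorem map_one_div_mul_prod_withDensity {f₁ f₂ : ℝ → ℝ≥0∞} (hf₁ : Measurable f₁)
    (hf₂ : Measurable f₂) :
    ((volume.withDensity f₁).prod (volume.withDensity f₂)).map (fun p ↦ 1 / (p.1 * p.2))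
      = volume.withDensity fun z ↦
          ∫⁻ x, f₁ x * (ENNReal.ofReal (1 / (|x| * z ^ 2)) * f₂ (1 / (x * z))) := by
  have h_meas : Measurable fun p : ℝ × ℝ ↦ 1 / (p.1 * p.2) := by fun_prop
  ext s hs
  rw [Measure.map_apply h_meas hs, Measure.prod_apply (h_meas hs),
    lintegral_withDensity_eq_lintegral_mul _ hf₁ (measurable_measure_prodMk_left (h_meas hs)),
    withDensity_apply _ hs, lintegral_lintegral_swap (by fun_prop : Measurable _).aemeasurable]
  refine lintegral_congr_ae ?_
  filter_upwards [Measure.ae_ne volume 0] with x hx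
  rw [Pi.mul_apply, withDensity_apply _ (measurable_prodMk_left (h_meas hs)),
    lintegral_const_mul _ (by fun_prop)]
  exact congrArg (f₁ x * ·) (setLIntegral_preimage_one_div_mul hx f₂ hs)

theorem integrableOn_exp_neg_mul_cosh {u : ℝ} (hu : 0 < u) :
    IntegrableOn (fun t ↦ exp (-(u * cosh t))) (Ioi 0) := by
  refine (exp_neg_integrableOn_Ioi 0 hu).mono' (by fun_prop) ?_
  filter_upwards [ae_restrict_mem measurableSet_Ioi] with t ht
  have h_le : t ≤ cosh t := (self_le_sinh_iff.2 (le_of_lt ht)).trans (sinh_lt_cosh t).le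
  rw [norm_of_nonneg (exp_nonneg _), exp_le_exp, neg_mul, neg_le_neg_iff]
  exact mul_le_mul_of_nonneg_left h_le hu.le

@[fun_prop]
theorem measurable_besselK0 : Measurable besselK0 :=
  (StronglyMeasurable.integral_prod_right' (f := fun p : ℝ × ℝ ↦ exp (-(p.1 * cosh p.2)))
    (by fun_prop)).measurable

theorem besselK0_nonneg (x : ℝ) : 0 ≤ besselK0 x :=
  integral_nonneg fun _ ↦ exp_nonneg _

theorem lintegral_exp_neg_mul_cosh {u : ℝ} (hu : 0 < u) :
    ∫⁻ t, ENNReal.ofReal (exp (-(u * cosh t))) = ENNReal.ofReal (2 * besselK0 u) := by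
  rw [lintegral_eq_two_mul_setLIntegral_Ioi_of_even fun t ↦ by rw [cosh_neg], besselK0,
    ENNReal.ofReal_mul zero_le_two, ENNReal.ofReal_ofNat,
    ofReal_integral_eq_lintegral_ofReal (integrableOn_exp_neg_mul_cosh hu)
      (ae_of_all _ fun t ↦ exp_nonneg _)]

theorem gaussianPDFReal_zero_one_mul (x y : ℝ) :
    gaussianPDFReal 0 1 x * gaussianPDFReal 0 1 y = (2 * π)⁻¹ * exp (-(x ^ 2 + y ^ 2) / 2) := by
  have h_sqrt : (√(2 * π))⁻¹ * (√(2 * π))⁻¹ = (2 * π)⁻¹ := by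
    rw [← mul_inv, mul_self_sqrt (by positivity)]
  simp only [gaussianPDFReal, NNReal.coe_one, mul_one, sub_zero]
  rw [mul_mul_mul_comm, h_sqrt, ← exp_add]
  ring_nf

theorem gaussianPDF_zero_neg (v : ℝ≥0) (x : ℝ) :
    gaussianPDF 0 v (-x) = gaussianPDF 0 v x := by
  simp [gaussianPDF, gaussianPDFReal]

theorem setLIntegral_Ioi_eq_lintegral_mul_exp_half {r : ℝ} (hr : 0 < r) (g : ℝ → ℝ≥0∞) :
    ∫⁻ x in Ioi 0, g x
      = ∫⁻ t, ENNReal.ofReal (r * exp (t / 2) / 2) * g (r * exp (t / 2)) := by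
  set ψ : ℝ → ℝ := fun t ↦ r * exp (t / 2)
  have hψ_deriv (t : ℝ) : HasDerivAt ψ (ψ t / 2) t := by
    refine (((hasDerivAt_id t).div_const 2).exp.const_mul r).congr_deriv ?_
    simp only [ψ, id]
    ring
  have hψ_mono : StrictMono ψ := fun a b hab ↦
    mul_lt_mul_of_pos_left (exp_lt_exp.2 (by linarith)) hr
  have hψ_image : ψ '' univ = Ioi 0 := by
    refine Subset.antisymm
      (image_subset_iff.2 fun t _ ↦ show 0 < r * exp (t / 2) by positivity)
      fun x (hx : 0 < x) ↦ ⟨2 * log (x / r), trivial, ?_⟩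
    show r * exp (2 * log (x / r) / 2) = x
    rw [mul_div_cancel_left₀ _ two_ne_zero, exp_log (by positivity)]
    field_simp
  rw [← hψ_image, lintegral_image_eq_lintegral_abs_deriv_mul MeasurableSet.univ
    (fun t _ ↦ (hψ_deriv t).hasDerivWithinAt) hψ_mono.injective.injOn, setLIntegral_univ]
  simp only [ψ, abs_of_pos (by positivity : 0 < r * exp (_ / 2) / 2)]

theorem ofReal_half_mul_gaussianPDF_mul_gaussianPDF_one_div_mul {x z t : ℝ} (hx : 0 < x)
    (hz : z ≠ 0) (hx_sq : x ^ 2 = exp t / |z|) :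
    ENNReal.ofReal (x / 2) *
        (gaussianPDF 0 1 x * (ENNReal.ofReal (1 / (|x| * z ^ 2)) * gaussianPDF 0 1 (1 / (x * z))))
      = ENNReal.ofReal (4 * π * z ^ 2)⁻¹ * ENNReal.ofReal (exp (-(1 / |z| * cosh t))) := by
  have h_exponent : x ^ 2 + (1 / (x * z)) ^ 2 = 2 * (1 / |z| * cosh t) := by
    rw [one_div, inv_pow, mul_pow, hx_sq, ← sq_abs z, cosh_eq, exp_neg]
    field_simp
  have h_real : x / 2 * (gaussianPDFReal 0 1 x *
        (1 / (x * z ^ 2) * gaussianPDFReal 0 1 (1 / (x * z))))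
      = (4 * π * z ^ 2)⁻¹ * exp (-(1 / |z| * cosh t)) :=
    calc _ = 1 / (2 * z ^ 2) *
          (gaussianPDFReal 0 1 x * gaussianPDFReal 0 1 (1 / (x * z))) := by
          field_simp
      _ = _ := by
          rw [gaussianPDFReal_zero_one_mul, h_exponent]
          field_simp
          ring
  rw [← ENNReal.ofReal_mul (by positivity), ← h_real, ENNReal.ofReal_mul (by positivity),
    ENNReal.ofReal_mul (gaussianPDFReal_nonneg _ _ _), ENNReal.ofReal_mul (by positivity),
    abs_of_pos hx]
  rfl

theorem lintegral_gaussianPDF_mul_gaussianPDF_one_div_mul {z : ℝ} (hz : z ≠ 0) :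
    ∫⁻ x, gaussianPDF 0 1 x *
        (ENNReal.ofReal (1 / (|x| * z ^ 2)) * gaussianPDF 0 1 (1 / (x * z)))
      = ENNReal.ofReal (1 / (π * z ^ 2) * besselK0 (1 / |z|)) := by
  have hu : 0 < 1 / |z| := by positivity
  set F : ℝ → ℝ≥0∞ := fun x ↦
    gaussianPDF 0 1 x * (ENNReal.ofReal (1 / (|x| * z ^ 2)) * gaussianPDF 0 1 (1 / (x * z)))
  have hF_even (x : ℝ) : F (-x) = F x := by
    simp only [F, abs_neg, neg_mul, one_div_neg_eq_neg_one_div, gaussianPDF_zero_neg]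
  calc ∫⁻ x, F x = 2 * ∫⁻ x in Ioi 0, F x :=
        lintegral_eq_two_mul_setLIntegral_Ioi_of_even hF_even
    _ = 2 * ∫⁻ t, ENNReal.ofReal (4 * π * z ^ 2)⁻¹ *
          ENNReal.ofReal (exp (-(1 / |z| * cosh t))) := by
      rw [setLIntegral_Ioi_eq_lintegral_mul_exp_half (sqrt_pos.2 hu)]
      refine congrArg (2 * ·) (lintegral_congr fun t ↦ ?_)
      refine ofReal_half_mul_gaussianPDF_mul_gaussianPDF_one_div_mul (by positivity) hz ?_
      rw [exp_half, mul_pow, sq_sqrt hu.le, sq_sqrt (exp_pos t).le, one_div_mul_eq_div]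
    _ = 2 * (ENNReal.ofReal (4 * π * z ^ 2)⁻¹ * ENNReal.ofReal (2 * besselK0 (1 / |z|))) := by
      rw [lintegral_const_mul' _ _ ENNReal.ofReal_ne_top, lintegral_exp_neg_mul_cosh hu]
    _ = _ := by
      rw [← ENNReal.ofReal_mul (by positivity), ← ENNReal.ofReal_ofNat 2,
        ← ENNReal.ofReal_mul zero_le_two]
      congr 1
      field_simp
      ring

noncomputable def reciprocalProductGaussianPDF (z : ℝ) : ℝ :=
  if z = 0 then 0 else 1 / (π * z ^ 2) * besselK0 (1 / |z|)

theorem reciprocalProductGaussianPDF_nonneg (z : ℝ) : 0 ≤ reciprocalProductGaussianPDF z := by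
  have := besselK0_nonneg (1 / |z|)
  unfold reciprocalProductGaussianPDF
  split_ifs <;> positivity

theorem measurable_reciprocalProductGaussianPDF : Measurable reciprocalProductGaussianPDF :=
  Measurable.ite (measurableSet_singleton 0) measurable_const (by fun_prop)

theorem map_one_div_mul_gaussianReal_prod :
    ((gaussianReal 0 1).prod (gaussianReal 0 1)).map (fun p ↦ 1 / (p.1 * p.2))
      = volume.withDensity fun z ↦ ENNReal.ofReal (reciprocalProductGaussianPDF z) := by
  rw [gaussianReal_of_var_ne_zero 0 one_ne_zero, map_one_div_mul_prod_withDensity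
    (measurable_gaussianPDF 0 1) (measurable_gaussianPDF 0 1)]
  congr 1 with z
  rcases eq_or_ne z 0 with rfl | hz
  · simp [reciprocalProductGaussianPDF]
  · rw [reciprocalProductGaussianPDF, if_neg hz,
      lintegral_gaussianPDF_mul_gaussianPDF_one_div_mul hz]

/-- The reciprocal of the product of two independent standard normals has density
`z ↦ (1/(π z²)) K₀(1/|z|)` (with value `0` at `z = 0`). -/
theorem pdf_reciprocal_product_two_normals
    {Ω : Type*} [MeasureSpace Ω] [IsProbabilityMeasure (ℙ : Measure Ω)]
    (Y₁ Y₂ : Ω → ℝ) (hY₁ : Measurable Y₁) (hY₂ : Measurable Y₂)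
    (hlaw₁ : Measure.map Y₁ ℙ = gaussianReal 0 1)
    (hlaw₂ : Measure.map Y₂ ℙ = gaussianReal 0 1)
    (hindep : IndepFun Y₁ Y₂ ℙ) :
    ∀ a : ℝ, ℙ {ω | 1 / (Y₁ ω * Y₂ ω) ≤ a} =
      ENNReal.ofReal (∫ z in Set.Iic a,
        if z = 0 then 0 else (1 / (Real.pi * z ^ 2)) * besselK0 (1 / |z|)) := by
  intro a
  have h_pair : Measure.map (fun ω ↦ (Y₁ ω, Y₂ ω)) ℙ
      = (gaussianReal 0 1).prod (gaussianReal 0 1) := by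
    rw [(indepFun_iff_map_prod_eq_prod_map_map hY₁.aemeasurable hY₂.aemeasurable).1 hindep,
      hlaw₁, hlaw₂]
  have h_law : Measure.map (fun ω ↦ 1 / (Y₁ ω * Y₂ ω)) ℙ
      = volume.withDensity fun z ↦ ENNReal.ofReal (reciprocalProductGaussianPDF z) := by
    rw [← map_one_div_mul_gaussianReal_prod, ← h_pair,
      Measure.map_map (by fun_prop) (by fun_prop)]
    rfl
  have h_cdf : ℙ {ω | 1 / (Y₁ ω * Y₂ ω) ≤ a}
      = ∫⁻ z in Iic a, ENNReal.ofReal (reciprocalProductGaussianPDF z) := by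
    rw [← withDensity_apply _ measurableSet_Iic, ← h_law,
      Measure.map_apply (by fun_prop) measurableSet_Iic]
    rfl
  change _ = ENNReal.ofReal (∫ z in Iic a, reciprocalProductGaussianPDF z)
  rw [h_cdf,
    integral_eq_lintegral_of_nonneg_ae (ae_of_all _ reciprocalProductGaussianPDF_nonneg)
      measurable_reciprocalProductGaussianPDF.aestronglyMeasurable,
    ENNReal.ofReal_toReal (h_cdf ▸ measure_ne_top _ _)]
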